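/- Let R > 0, 0 < a < R, μ = π/(2·ln(R/a)), and let ω, T' > 0 with T' > e. Define φ(x,t) = μ·ln(R/x) + (ω − x)/ln(t) for x ∈ [a, R], t ≥ T'. Then φ_x < 0, φ_xx > 0, and for any measurable function q(x,t) with 0 ≤ q ≤ 1, φ_t − φ_x/x − q·φ_xx ≥ (t·ln t − ωR)/(x·t·(ln t)²). In particular, if t·ln t ≥ ωR then φ_t − φ_x/x − q·φ_xx ≥ 0. -/

import Mathlib

/-!
Write `L = log t`. In `x` the barrier is `μ log(R/x) + (ω - x)/L`, so `φ_x = -μ/x - 1/L < 0` and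
`φ_xx = μ/x² > 0`, while `φ_t = -(ω - x)/(t L²)`. Substituting, the defect
`φ_t - φ_x/x - q φ_xx - (t L - ω R)/(x t L²)` equals `(1 - q) μ/x² + (x² + ω (R - x))/(x t L²)`,
a sum of two nonnegative terms for `q ≤ 1` and `a ≤ x ≤ R`.
-/

open Real

theorem hasDerivAt_log_const_div {R y : ℝ} (hR : R ≠ 0) (hy : y ≠ 0) :
    HasDerivAt (fun x => log (R / x)) (-y⁻¹) y := by
  have hquot : HasDerivAt (fun x => R / x) (-R / y ^ 2) y := by
    refine ((hasDerivAt_const y R).div (hasDerivAt_id y) hy).congr_deriv ?_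
    simp
  convert hquot.log (div_ne_zero hR hy) using 1
  field_simp

section Barrier

variable (μ R ω L : ℝ)

theorem hasDerivAt_barrier {y : ℝ} (hR : R ≠ 0) (hy : y ≠ 0) :
    HasDerivAt (fun x => μ * log (R / x) + (ω - x) / L) (-μ / y - 1 / L) y := by
  refine (((hasDerivAt_log_const_div hR hy).const_mul μ).add
    (((hasDerivAt_id y).const_sub ω).div_const L)).congr_deriv ?_
  ring

theorem deriv_barrier {y : ℝ} (hR : R ≠ 0) (hy : y ≠ 0) :
    deriv (fun x => μ * log (R / x) + (ω - x) / L) y = -μ / y - 1 / L :=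
  (hasDerivAt_barrier μ R ω L hR hy).deriv

theorem deriv_deriv_barrier {y : ℝ} (hR : R ≠ 0) (hy : y ≠ 0) :
    deriv (deriv (fun x => μ * log (R / x) + (ω - x) / L)) y = μ / y ^ 2 := by
  have hloc : deriv (fun x => μ * log (R / x) + (ω - x) / L) =ᶠ[nhds y]
      fun x => -μ * x⁻¹ - 1 / L := by
    filter_upwards [isOpen_ne.mem_nhds hy] with x hx
    rw [deriv_barrier μ R ω L hR hx]
    ring
  rw [hloc.deriv_eq]
  convert ((hasDerivAt_inv hy).const_mul (-μ)).sub_const (1 / L) |>.deriv using 1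
  ring

end Barrier

theorem deriv_const_add_div_log (c b : ℝ) {t : ℝ} (ht : t ≠ 0) (hlog : log t ≠ 0) :
    deriv (fun t => c + b / log t) t = -b / (t * log t ^ 2) := by
  refine HasDerivAt.deriv ?_
  refine (((hasDerivAt_const t b).div (hasDerivAt_log ht) hlog).const_add c).congr_deriv ?_
  field_simp
  ring

theorem barrier_defect_eq {μ R ω L x t q : ℝ} (hx : x ≠ 0) (ht : t ≠ 0) (hL : L ≠ 0) :
    -(ω - x) / (t * L ^ 2) - (-μ / x - 1 / L) / x - q * (μ / x ^ 2)
        - (t * L - ω * R) / (x * t * L ^ 2)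
      = (1 - q) * (μ / x ^ 2) + (x ^ 2 + ω * (R - x)) / (x * t * L ^ 2) := by
  field_simp
  ring

theorem barrier_defect_nonneg {μ R ω L x t q : ℝ} (hμ : 0 ≤ μ) (hω : 0 ≤ ω) (hx : 0 < x)
    (hxR : x ≤ R) (ht : 0 < t) (hL : L ≠ 0) (hq : q ≤ 1) :
    (t * L - ω * R) / (x * t * L ^ 2)
      ≤ -(ω - x) / (t * L ^ 2) - (-μ / x - 1 / L) / x - q * (μ / x ^ 2) := by
  have hdiffusion : 0 ≤ (1 - q) * (μ / x ^ 2) := mul_nonneg (by linarith) (by positivity)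
  have hdrift : 0 ≤ (x ^ 2 + ω * (R - x)) / (x * t * L ^ 2) :=
    div_nonneg (by nlinarith) (by positivity)
  linarith [barrier_defect_eq (μ := μ) (R := R) (ω := ω) (q := q) hx.ne' ht.ne' hL]

theorem supersolution_barrier_general (R a μ ω T' : ℝ) (ha : 0 < a) (haR : a < R)
    (hμ : μ = Real.pi / (2 * Real.log (R / a))) (hω : 0 < ω) (hT' : Real.exp 1 < T') :
    ∀ x ∈ Set.Icc a R, ∀ t : ℝ, T' ≤ t →
      (deriv (fun x => μ * Real.log (R / x) + (ω - x) / Real.log t) x < 0) ∧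
      (deriv (deriv (fun x => μ * Real.log (R / x) + (ω - x) / Real.log t)) x > 0) ∧
      (∀ q : ℝ, 0 ≤ q → q ≤ 1 →
        deriv (fun t => μ * Real.log (R / x) + (ω - x) / Real.log t) t
          - (deriv (fun x => μ * Real.log (R / x) + (ω - x) / Real.log t) x) / x
          - q * deriv (deriv (fun x => μ * Real.log (R / x) + (ω - x) / Real.log t)) x
        ≥ (t * Real.log t - ω * R) / (x * t * (Real.log t) ^ 2)) ∧
      (t * Real.log t ≥ ω * R →
        ∀ q : ℝ, 0 ≤ q → q ≤ 1 →
        deriv (fun t => μ * Real.log (R / x) + (ω - x) / Real.log t) t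
          - (deriv (fun x => μ * Real.log (R / x) + (ω - x) / Real.log t) x) / x
          - q * deriv (deriv (fun x => μ * Real.log (R / x) + (ω - x) / Real.log t)) x
        ≥ 0) := by
  rintro x ⟨hax, hxR⟩ t hT't
  have hx : 0 < x := ha.trans_le hax
  have hR : R ≠ 0 := (ha.trans haR).ne'
  have ht : 0 < t := (exp_pos 1).trans (hT'.trans_le hT't)
  have hL : 0 < log t := one_pos.trans ((lt_log_iff_exp_lt ht).2 (hT'.trans_le hT't))
  have hμ0 : 0 < μ := hμ ▸ div_pos pi_pos
    (mul_pos two_pos (log_pos ((one_lt_div ha).2 haR)))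
  rw [deriv_barrier μ R ω _ hR hx.ne', deriv_deriv_barrier μ R ω _ hR hx.ne',
    deriv_const_add_div_log _ _ ht.ne' hL.ne']
  have hsuper : ∀ q : ℝ, 0 ≤ q → q ≤ 1 →
      -(ω - x) / (t * log t ^ 2) - (-μ / x - 1 / log t) / x - q * (μ / x ^ 2)
        ≥ (t * log t - ω * R) / (x * t * log t ^ 2) := fun q _ hq =>
    barrier_defect_nonneg hμ0.le hω.le hx hxR ht hL.ne' hq
  refine ⟨?_, by positivity, hsuper, fun hgrowth q hq0 hq1 => ?_⟩
  · have : 0 < μ / x + 1 / log t := by positivity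
    linarith [neg_div x μ]
  · exact (div_nonneg (sub_nonneg.2 hgrowth) (by positivity)).trans (hsuper q hq0 hq1)

theorem supersolution_barrier (R a μ ω T' : ℝ) (hR : 0 < R) (ha : 0 < a) (haR : a < R)
    (hμ : μ = Real.pi / (2 * Real.log (R / a))) (hω : 0 < ω) (hT' : Real.exp 1 < T') :
    ∀ x ∈ Set.Icc a R, ∀ t : ℝ, T' ≤ t →
      (deriv (fun x => μ * Real.log (R / x) + (ω - x) / Real.log t) x < 0) ∧
      (deriv (deriv (fun x => μ * Real.log (R / x) + (ω - x) / Real.log t)) x > 0) ∧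
      (∀ q : ℝ, 0 ≤ q → q ≤ 1 →
        deriv (fun t => μ * Real.log (R / x) + (ω - x) / Real.log t) t
          - (deriv (fun x => μ * Real.log (R / x) + (ω - x) / Real.log t) x) / x
          - q * deriv (deriv (fun x => μ * Real.log (R / x) + (ω - x) / Real.log t)) x
        ≥ (t * Real.log t - ω * R) / (x * t * (Real.log t) ^ 2)) ∧
      (t * Real.log t ≥ ω * R →
        ∀ q : ℝ, 0 ≤ q → q ≤ 1 →
        deriv (fun t => μ * Real.log (R / x) + (ω - x) / Real.log t) t
          - (deriv (fun x => μ * Real.log (R / x) + (ω - x) / Real.log t) x) / x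
          - q * deriv (deriv (fun x => μ * Real.log (R / x) + (ω - x) / Real.log t)) x
        ≥ 0) :=
  supersolution_barrier_general R a μ ω T' ha haR hμ hω hT'
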